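/- arXiv:1810.05476 — 3 statements merged into one kernel-verified Lean document; each statement's English description precedes it below -/
import Mathlib

section
/- Let A ∈ M_n(ℂ) be positive definite with eigenvalues a_1 ≥ ... ≥ a_n and orthonormal eigenvectors v_1,...,v_n, and let K ∈ M_n(ℂ). Then lim_{p→∞} λ_i((K A^p K*)^{1/p}) = a_i for all i = 1,...,n if and only if {K v_1,...,K v_n} is linearly independent (equivalently, K is invertible). -/
open Matrix Filter ComplexOrder

noncomputable def hfun {n : ℕ} (f : ℝ → ℂ) (A : Matrix (Fin n) (Fin n) ℂ) :
    Matrix (Fin n) (Fin n) ℂ :=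
  if hA : A.IsHermitian then
    (hA.eigenvectorUnitary : Matrix (Fin n) (Fin n) ℂ) *
      Matrix.diagonal (fun i => f (hA.eigenvalues i)) *
      star (hA.eigenvectorUnitary : Matrix (Fin n) (Fin n) ℂ)
  else 0

noncomputable def mrpow {n : ℕ} (A : Matrix (Fin n) (Fin n) ℂ) (p : ℝ) :
    Matrix (Fin n) (Fin n) ℂ :=
  hfun (fun t => ((t ^ p : ℝ) : ℂ)) A

noncomputable def eigsDesc {n : ℕ} (A : Matrix (Fin n) (Fin n) ℂ) : List ℝ :=
  if hA : A.IsHermitian then (List.ofFn hA.eigenvalues).mergeSort (fun a b => b ≤ a) else []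

noncomputable def lam {n : ℕ} (A : Matrix (Fin n) (Fin n) ℂ) (k : ℕ) : ℝ :=
  (eigsDesc A).getD k 0

noncomputable def ranM {n : ℕ} (A : Matrix (Fin n) (Fin n) ℂ) :
    Submodule ℂ (EuclideanSpace ℂ (Fin n)) :=
  LinearMap.range (Matrix.toEuclideanLin A)

noncomputable def projOnto {n : ℕ} (U : Submodule ℂ (EuclideanSpace ℂ (Fin n))) :
    Matrix (Fin n) (Fin n) ℂ :=
  LinearMap.toMatrix (EuclideanSpace.basisFun (Fin n) ℂ).toBasis
    (EuclideanSpace.basisFun (Fin n) ℂ).toBasis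
    (U.subtype.comp U.orthogonalProjectionOnto.toLinearMap)

/-!
Write `λₖ` for the `k`-th largest eigenvalue. If `K` is invertible, Ostrowski's theorem gives
constants `c, M > 0` with `c λₖ(B) ≤ λₖ(K B K*) ≤ M λₖ(B)` for every positive semidefinite `B`.
For `B = A^p`, whose eigenvalues are `aₖ^p`, taking `p`-th roots squeezes `λₖ((K A^p K*)^{1/p})`
between `c^{1/p} aₖ` and `M^{1/p} aₖ`, and both bounds tend to `aₖ`. Ostrowski's bounds follow
from the easy half of the Courant–Fischer min-max principle, applied on the preimage under `K*`
of a span of eigenvectors of `B`. If `K` is singular, then so is `K A^p K*`, so the smallest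
eigenvalue of `(K A^p K*)^{1/p}` is `0` for every `p`, whereas `aₙ > 0`. Finally, since the `vᵢ`
form a basis, the `K vᵢ` are linearly independent exactly when `K` is invertible.
-/

open Module
open scoped InnerProductSpace

theorem Submodule.exists_mem_inf_ne_zero_of_finrank_lt {K V : Type*} [DivisionRing K]
    [AddCommGroup V] [Module K V] [FiniteDimensional K V] {W F : Submodule K V}
    (h : finrank K V < finrank K W + finrank K F) : ∃ x ∈ W ⊓ F, x ≠ 0 := by
  by_contra! hWF
  exact h.not_ge (finrank_add_finrank_le_of_disjoint (disjoint_def.mpr fun x hW hF =>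
    hWF x ⟨hW, hF⟩))

theorem Antitone.sort_map_univ_eq_ofFn {α : Type*} [LinearOrder α] {n : ℕ} {d : Fin n → α}
    (hd : Antitone d) : (Finset.univ.val.map d).sort (· ≥ ·) = List.ofFn d := by
  rw [Fin.univ_val_map, Multiset.coe_sort]
  apply List.mergeSort_of_pairwise
  simp_rw [decide_eq_true_eq, ← List.sortedGE_iff_pairwise]
  exact hd.sortedGE_ofFn

theorem Real.rpow_inv_mul_le_of_mul_rpow_le {c x y p : ℝ} (hc : 0 ≤ c) (hx : 0 ≤ x) (hp : 0 < p)
    (h : c * x ^ p ≤ y) : c ^ p⁻¹ * x ≤ y ^ p⁻¹ := by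
  calc c ^ p⁻¹ * x = (c * x ^ p) ^ p⁻¹ := by
        rw [Real.mul_rpow hc (by positivity), Real.rpow_rpow_inv hx hp.ne']
    _ ≤ y ^ p⁻¹ := by gcongr

theorem Real.rpow_inv_le_of_le_mul_rpow {M x y p : ℝ} (hM : 0 ≤ M) (hx : 0 ≤ x) (hy : 0 ≤ y)
    (hp : 0 < p) (h : y ≤ M * x ^ p) : y ^ p⁻¹ ≤ M ^ p⁻¹ * x := by
  calc y ^ p⁻¹ ≤ (M * x ^ p) ^ p⁻¹ := by gcongr
    _ = M ^ p⁻¹ * x := by rw [Real.mul_rpow hM (by positivity), Real.rpow_rpow_inv hx hp.ne']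

theorem tendsto_rpow_inv_mul_atTop {c : ℝ} (hc : 0 < c) (x : ℝ) :
    Tendsto (fun p : ℝ => c ^ p⁻¹ * x) atTop (nhds x) := by
  simpa using
    ((Real.continuousAt_const_rpow hc.ne').tendsto.comp tendsto_inv_atTop_zero).mul_const x

namespace OrthonormalBasis

open Submodule

variable {𝕜 E ι : Type*} [RCLike 𝕜] [NormedAddCommGroup E] [InnerProductSpace 𝕜 E] [Fintype ι]

theorem finrank_span_image (b : OrthonormalBasis ι 𝕜 E) (s : Finset ι) :
    finrank 𝕜 (span 𝕜 (b '' s)) = s.card := by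
  rw [Set.image_eq_range]
  exact (finrank_span_eq_card
    (b.orthonormal.linearIndependent.comp _ Subtype.val_injective)).trans (by simp)

theorem inner_eq_zero_of_mem_span_image (b : OrthonormalBasis ι 𝕜 E) {s : Set ι} {x : E}
    (hx : x ∈ span 𝕜 (b '' s)) {i : ι} (hi : i ∉ s) : ⟪b i, x⟫_𝕜 = 0 := by
  refine mem_orthogonal_singleton_iff_inner_right.mp (span_le.mpr ?_ hx)
  rintro _ ⟨j, hj, rfl⟩
  exact mem_orthogonal_singleton_iff_inner_right.mpr
    (b.orthonormal.inner_eq_zero (ne_of_mem_of_not_mem hj hi).symm)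

end OrthonormalBasis

namespace LinearMap.IsSymmetric

open Submodule

variable {𝕜 E : Type*} [RCLike 𝕜] [NormedAddCommGroup E] [InnerProductSpace 𝕜 E]
  [FiniteDimensional 𝕜 E] {S T : E →ₗ[𝕜] E} {n : ℕ}

theorem re_inner_apply_eq_sum (hT : T.IsSymmetric) (hn : finrank 𝕜 E = n) (x : E) :
    RCLike.re ⟪x, T x⟫_𝕜 =
      ∑ i, hT.eigenvalues hn i * ‖⟪hT.eigenvectorBasis hn i, x⟫_𝕜‖ ^ 2 := by
  set b := hT.eigenvectorBasis hn
  rw [← b.sum_inner_mul_inner x (T x), map_sum]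
  refine Finset.sum_congr rfl fun i _ => ?_
  rw [← hT (b i), apply_eigenvectorBasis, inner_smul_left, ← inner_conj_symm x (b i),
    mul_left_comm, RCLike.conj_mul, RCLike.conj_ofReal]
  norm_cast

theorem re_inner_apply_le_of_mem_span (hT : T.IsSymmetric) (hn : finrank 𝕜 E = n)
    {s : Set (Fin n)} {c : ℝ} (hc : ∀ i ∈ s, hT.eigenvalues hn i ≤ c) {x : E}
    (hx : x ∈ span 𝕜 (hT.eigenvectorBasis hn '' s)) :
    RCLike.re ⟪x, T x⟫_𝕜 ≤ c * ‖x‖ ^ 2 := by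
  rw [hT.re_inner_apply_eq_sum hn, ← (hT.eigenvectorBasis hn).sum_sq_norm_inner_right,
    Finset.mul_sum]
  refine Finset.sum_le_sum fun i _ => ?_
  by_cases hi : i ∈ s
  · exact mul_le_mul_of_nonneg_right (hc i hi) (by positivity)
  · simp [(hT.eigenvectorBasis hn).inner_eq_zero_of_mem_span_image hx hi]

theorem le_re_inner_apply_of_mem_span (hT : T.IsSymmetric) (hn : finrank 𝕜 E = n)
    {s : Set (Fin n)} {c : ℝ} (hc : ∀ i ∈ s, c ≤ hT.eigenvalues hn i) {x : E}
    (hx : x ∈ span 𝕜 (hT.eigenvectorBasis hn '' s)) :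
    c * ‖x‖ ^ 2 ≤ RCLike.re ⟪x, T x⟫_𝕜 := by
  rw [hT.re_inner_apply_eq_sum hn, ← (hT.eigenvectorBasis hn).sum_sq_norm_inner_right,
    Finset.mul_sum]
  refine Finset.sum_le_sum fun i _ => ?_
  by_cases hi : i ∈ s
  · exact mul_le_mul_of_nonneg_right (hc i hi) (by positivity)
  · simp [(hT.eigenvectorBasis hn).inner_eq_zero_of_mem_span_image hx hi]

/-- One inequality of the Courant–Fischer min-max principle. -/
theorem eigenvalues_le_of_forall_re_inner_le (hT : T.IsSymmetric) (hn : finrank 𝕜 E = n)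
    (k : Fin n) {W : Submodule 𝕜 E} (hW : n ≤ finrank 𝕜 W + k) {c : ℝ}
    (hc : ∀ x ∈ W, RCLike.re ⟪x, T x⟫_𝕜 ≤ c * ‖x‖ ^ 2) : hT.eigenvalues hn k ≤ c := by
  set F := span 𝕜 (hT.eigenvectorBasis hn '' ↑(Finset.Iic k))
  have hF : finrank 𝕜 F = k + 1 := by
    rw [(hT.eigenvectorBasis hn).finrank_span_image, Fin.card_Iic]
  obtain ⟨x, ⟨hxW, hxF⟩, hx⟩ := exists_mem_inf_ne_zero_of_finrank_lt (W := W) (F := F) (by omega)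
  have hlow := hT.le_re_inner_apply_of_mem_span hn
    (fun i hi => hT.eigenvalues_antitone hn (Finset.mem_Iic.mp hi)) hxF
  exact le_of_mul_le_mul_right (hlow.trans (hc x hxW)) (by positivity)

/-- One half of Ostrowski's theorem; the other half is this one with `S` and `T` exchanged and
`G` replaced by `G.symm`. -/
theorem eigenvalues_le_sq_mul_eigenvalues (hS : S.IsSymmetric) (hT : T.IsSymmetric)
    (hn : finrank 𝕜 E = n) (G : E ≃ₗ[𝕜] E) (hST : ∀ x, ⟪x, S x⟫_𝕜 = ⟪G x, T (G x)⟫_𝕜)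
    {M : ℝ} (hG : ∀ x, ‖G x‖ ≤ M * ‖x‖) (k : Fin n) (hk : 0 ≤ hT.eigenvalues hn k) :
    hS.eigenvalues hn k ≤ M ^ 2 * hT.eigenvalues hn k := by
  set F := span 𝕜 (hT.eigenvectorBasis hn '' ↑(Finset.Ici k))
  have hW : finrank 𝕜 (F.map G.symm.toLinearMap) = n - k := by
    rw [LinearEquiv.finrank_map_eq, (hT.eigenvectorBasis hn).finrank_span_image, Fin.card_Ici]
  refine hS.eigenvalues_le_of_forall_re_inner_le hn k (W := F.map G.symm.toLinearMap) (by omega)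
    fun x hx => ?_
  have hGx : G x ∈ F := by simpa using (mem_map_equiv (e := G.symm) F).mp hx
  calc RCLike.re ⟪x, S x⟫_𝕜 = RCLike.re ⟪G x, T (G x)⟫_𝕜 := by rw [hST]
    _ ≤ hT.eigenvalues hn k * ‖G x‖ ^ 2 := hT.re_inner_apply_le_of_mem_span hn
        (fun i hi => hT.eigenvalues_antitone hn (Finset.mem_Ici.mp hi)) hGx
    _ ≤ hT.eigenvalues hn k * (M * ‖x‖) ^ 2 := by gcongr; exact hG x
    _ = M ^ 2 * hT.eigenvalues hn k * ‖x‖ ^ 2 := by ring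

end LinearMap.IsSymmetric
namespace Matrix

open Polynomial

section Spectrum

variable {n : ℕ}

theorem eigsDesc_eq_sort {M : Matrix (Fin n) (Fin n) ℂ} (hM : M.IsHermitian) {d : Fin n → ℝ}
    (hd : M.charpoly = ∏ i, (X - C (d i : ℂ))) :
    eigsDesc M = (Finset.univ.val.map d).sort (· ≥ ·) := by
  have hroots : Finset.univ.val.map (fun i => (hM.eigenvalues i : ℂ)) =
      Finset.univ.val.map (fun i => (d i : ℂ)) := by
    have := hM.roots_charpoly_eq_eigenvalues
    rw [hd, roots_prod _ _ (by simp [Finset.prod_ne_zero_iff, X_sub_C_ne_zero])] at this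
    simpa using this.symm
  have : Finset.univ.val.map hM.eigenvalues = Finset.univ.val.map d := by
    apply Multiset.map_injective Complex.ofReal_injective
    simpa [Multiset.map_map, Function.comp_def] using hroots
  rw [eigsDesc, dif_pos hM, ← this, Fin.univ_val_map, Multiset.coe_sort]

theorem lam_eq_of_charpoly_eq {M : Matrix (Fin n) (Fin n) ℂ} (hM : M.IsHermitian) {d : Fin n → ℝ}
    (hd : M.charpoly = ∏ i, (X - C (d i : ℂ))) (hanti : Antitone d) (k : Fin n) :
    lam M k = d k := by
  rw [lam, eigsDesc_eq_sort hM hd, hanti.sort_map_univ_eq_ofFn,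
    List.getD_eq_getElem _ _ (by simp), List.getElem_ofFn]

theorem lam_eq_eigenvalues {M : Matrix (Fin n) (Fin n) ℂ} (hM : M.IsHermitian) (k : Fin n) :
    lam M k = (isSymmetric_toEuclideanLin_iff.mpr hM).eigenvalues finrank_euclideanSpace_fin k := by
  refine lam_eq_of_charpoly_eq hM ?_ (LinearMap.IsSymmetric.eigenvalues_antitone _ _) k
  have hT : (toEuclideanLin M).charpoly = M.charpoly :=
    charpoly_toLin M (PiLp.basisFun 2 ℂ (Fin n))
  exact hT ▸ (isSymmetric_toEuclideanLin_iff.mpr hM).charpoly_eq finrank_euclideanSpace_fin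

theorem charpoly_mul_diagonal_mul_conjTranspose {U : Matrix (Fin n) (Fin n) ℂ} (hU : Uᴴ * U = 1)
    (d : Fin n → ℝ) :
    (U * diagonal (fun i => (d i : ℂ)) * Uᴴ).charpoly = ∏ i, (X - C (d i : ℂ)) := by
  rw [charpoly_mul_comm, ← mul_assoc, hU, one_mul, charpoly_diagonal]

theorem mrpow_eq {M : Matrix (Fin n) (Fin n) ℂ} (hM : M.IsHermitian) (q : ℝ) :
    mrpow M q = (hM.eigenvectorUnitary : Matrix (Fin n) (Fin n) ℂ) *
      diagonal (fun i => ((hM.eigenvalues i ^ q : ℝ) : ℂ)) *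
        (hM.eigenvectorUnitary : Matrix (Fin n) (Fin n) ℂ)ᴴ := by
  rw [mrpow, hfun, dif_pos hM, star_eq_conjTranspose]

theorem PosSemidef.mrpow {M : Matrix (Fin n) (Fin n) ℂ} (hM : M.PosSemidef) (q : ℝ) :
    (mrpow M q).PosSemidef := by
  rw [mrpow_eq hM.1]
  refine PosSemidef.mul_mul_conjTranspose_same (posSemidef_diagonal_iff.mpr fun i => ?_) _
  exact Complex.zero_le_real.mpr (Real.rpow_nonneg (hM.eigenvalues_nonneg i) q)

theorem lam_mrpow {M : Matrix (Fin n) (Fin n) ℂ} (hM : M.PosSemidef) {q : ℝ} (hq : 0 < q)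
    (k : ℕ) : lam (mrpow M q) k = lam M k ^ q := by
  have hpow : eigsDesc (mrpow M q) = (eigsDesc M).map (· ^ q) := by
    rw [eigsDesc_eq_sort (hM.mrpow q).1 (d := fun i => hM.1.eigenvalues i ^ q)
        (by rw [mrpow_eq hM.1, charpoly_mul_diagonal_mul_conjTranspose
          (Unitary.coe_star_mul_self hM.1.eigenvectorUnitary)]),
      eigsDesc_eq_sort hM.1 hM.1.charpoly_eq,
      Multiset.map_sort (fun x : ℝ => x ^ q) _ (· ≥ ·) (· ≥ ·), Multiset.map_map]
    · rfl
    intro a ha b hb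
    obtain ⟨i, -, rfl⟩ := Multiset.mem_map.mp ha
    obtain ⟨j, -, rfl⟩ := Multiset.mem_map.mp hb
    exact (Real.rpow_le_rpow_iff (hM.eigenvalues_nonneg j) (hM.eigenvalues_nonneg i) hq).symm
  -- for `k ≥ n`, `lam` returns its default `0` on both sides, and `0 ^ q = 0`
  have := List.getD_map (l := eigsDesc M) (d := 0) (n := k) (· ^ q)
  rwa [Real.zero_rpow hq.ne', ← hpow] at this

theorem PosSemidef.eigenvalues_toEuclideanLin_nonneg {B : Matrix (Fin n) (Fin n) ℂ}
    (hB : B.PosSemidef) (k : Fin n) :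
    0 ≤ (isSymmetric_toEuclideanLin_iff.mpr hB.1).eigenvalues finrank_euclideanSpace_fin k :=
  (isPositive_toEuclideanLin_iff.mpr hB).nonneg_eigenvalues _ k

theorem inner_toEuclideanLin_mul_mul_conjTranspose (K B : Matrix (Fin n) (Fin n) ℂ)
    (x : EuclideanSpace ℂ (Fin n)) :
    ⟪x, toEuclideanLin (K * B * Kᴴ) x⟫_ℂ =
      ⟪toEuclideanLin Kᴴ x, toEuclideanLin B (toEuclideanLin Kᴴ x)⟫_ℂ := by
  simp only [toLpLin_mul_same, LinearMap.comp_apply]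
  rw [toEuclideanLin_conjTranspose_eq_adjoint, LinearMap.adjoint_inner_left]

/-- Ostrowski's theorem. -/
theorem exists_lam_mul_mul_conjTranspose_bounds {K : Matrix (Fin n) (Fin n) ℂ} (hK : IsUnit K) :
    ∃ c > 0, ∃ M > 0, ∀ B : Matrix (Fin n) (Fin n) ℂ, B.PosSemidef → ∀ k : Fin n,
      c * lam B k ≤ lam (K * B * Kᴴ) k ∧ lam (K * B * Kᴴ) k ≤ M * lam B k := by
  have hG : Function.Bijective (toEuclideanLin Kᴴ) :=
    (Module.End.isUnit_iff _).mp (((isUnit_conjTranspose K).mpr hK).map (toLpLinAlgEquiv 2))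
  set G := LinearEquiv.ofBijective _ hG
  obtain ⟨M, hM, hGM⟩ := (LinearMap.toContinuousLinearMap G.toLinearMap).bound
  obtain ⟨c, hc, hGc⟩ := (LinearMap.toContinuousLinearMap G.symm.toLinearMap).bound
  refine ⟨(c ^ 2)⁻¹, by positivity, M ^ 2, by positivity, fun B hB k => ?_⟩
  have hKBK : (K * B * Kᴴ).PosSemidef := hB.mul_mul_conjTranspose_same K
  have hinner := inner_toEuclideanLin_mul_mul_conjTranspose K B
  rw [lam_eq_eigenvalues hB.1, lam_eq_eigenvalues hKBK.1]
  constructor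
  · rw [inv_mul_le_iff₀ (by positivity)]
    refine LinearMap.IsSymmetric.eigenvalues_le_sq_mul_eigenvalues _ _ _ G.symm (fun y => ?_)
      hGc k (hKBK.eigenvalues_toEuclideanLin_nonneg k)
    simpa [G] using (hinner (G.symm y)).symm
  · exact LinearMap.IsSymmetric.eigenvalues_le_sq_mul_eigenvalues _ _ _ G hinner hGM k
      (hB.eigenvalues_toEuclideanLin_nonneg k)

theorem lam_mul_mul_conjTranspose_eq_zero {K B : Matrix (Fin n) (Fin n) ℂ} (hB : B.PosSemidef)
    (hK : ¬IsUnit K) : lam (K * B * Kᴴ) (n - 1) = 0 := by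
  have hKBK : (K * B * Kᴴ).PosSemidef := hB.mul_mul_conjTranspose_same K
  set hT := isSymmetric_toEuclideanLin_iff.mpr hKBK.1
  obtain ⟨x, hx, hKx⟩ : ∃ x ≠ 0, Kᴴ *ᵥ x = 0 := by
    simpa [exists_mulVec_eq_zero_iff, isUnit_iff_isUnit_det] using hK
  have hzero : Module.End.HasEigenvalue (toEuclideanLin (K * B * Kᴴ)) 0 := by
    refine Module.End.hasEigenvalue_of_hasEigenvector (x := WithLp.toLp 2 x) ⟨?_, by simpa using hx⟩
    simp [toLpLin_apply, hKx]
  obtain ⟨j, hj⟩ := hT.exists_eigenvalues_eq finrank_euclideanSpace_fin hzero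
  have hn := j.pos
  have hlast : j ≤ ⟨n - 1, by omega⟩ := Fin.le_def.mpr (Nat.le_sub_one_of_lt j.2)
  rw [show n - 1 = (⟨n - 1, by omega⟩ : Fin n) from rfl, lam_eq_eigenvalues hKBK.1]
  refine le_antisymm ?_ (hKBK.eigenvalues_toEuclideanLin_nonneg _)
  exact (hT.eigenvalues_antitone _ hlast).trans (RCLike.ofReal_eq_zero.mp hj).le

theorem lam_mrpow_mul_mrpow_mul_conjTranspose_eq_zero {A K : Matrix (Fin n) (Fin n) ℂ}
    (hA : A.PosSemidef) (hK : ¬IsUnit K) {p : ℝ} (hp : 0 < p) :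
    lam (mrpow (K * mrpow A p * Kᴴ) p⁻¹) (n - 1) = 0 := by
  rw [lam_mrpow ((hA.mrpow p).mul_mul_conjTranspose_same K) (inv_pos.mpr hp),
    lam_mul_mul_conjTranspose_eq_zero (hA.mrpow p) hK, Real.zero_rpow (inv_ne_zero hp.ne')]

theorem tendsto_lam_mrpow_mul_mrpow_mul_conjTranspose {A K : Matrix (Fin n) (Fin n) ℂ}
    (hA : A.PosSemidef) (hK : IsUnit K) {k : Fin n} {x : ℝ} (hx : 0 ≤ x)
    (hAk : ∀ p > 0, lam (mrpow A p) k = x ^ p) :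
    Tendsto (fun p : ℝ => lam (mrpow (K * mrpow A p * Kᴴ) p⁻¹) k) atTop (nhds x) := by
  obtain ⟨c, hc, M, hM, hbounds⟩ := exists_lam_mul_mul_conjTranspose_bounds hK
  have hsqueeze : ∀ p > 0, c ^ p⁻¹ * x ≤ lam (mrpow (K * mrpow A p * Kᴴ) p⁻¹) k ∧
      lam (mrpow (K * mrpow A p * Kᴴ) p⁻¹) k ≤ M ^ p⁻¹ * x := fun p hp => by
    have hB := hA.mrpow p
    obtain ⟨hlow, hhigh⟩ := hbounds _ hB k
    rw [hAk p hp] at hlow hhigh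
    rw [lam_mrpow (hB.mul_mul_conjTranspose_same K) (inv_pos.mpr hp)]
    exact ⟨Real.rpow_inv_mul_le_of_mul_rpow_le hc.le hx hp hlow,
      Real.rpow_inv_le_of_le_mul_rpow hM.le hx ((by positivity : 0 ≤ c * x ^ p).trans hlow) hp
        hhigh⟩
  exact tendsto_of_tendsto_of_tendsto_of_le_of_le' (tendsto_rpow_inv_mul_atTop hc x)
    (tendsto_rpow_inv_mul_atTop hM x)
    ((eventually_gt_atTop 0).mono fun p hp => (hsqueeze p hp).1)
    ((eventually_gt_atTop 0).mono fun p hp => (hsqueeze p hp).2)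

end Spectrum

variable {m : Type*} [Fintype m] [DecidableEq m]

theorem linearIndependent_mulVec_iff_isUnit {R : Type*} [Field R] (K : Matrix m m R)
    {v : m → m → R} (hv : IsUnit (of fun i j => v j i)) :
    LinearIndependent R (fun i => K *ᵥ v i) ↔ IsUnit K := by
  have : (fun i => K *ᵥ v i) = (K * of fun i j => v j i).col := by
    ext i j
    simp [mul_apply, mulVec, dotProduct]
  rw [this, linearIndependent_cols_iff_isUnit, isUnit_iff_isUnit_det, det_mul, IsUnit.mul_iff,
    ← isUnit_iff_isUnit_det, ← isUnit_iff_isUnit_det]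
  exact and_iff_left hv

theorem sum_smul_vecMulVec_eq_mul_diagonal_mul {R : Type*} [CommSemiring R] [StarRing R]
    (v : m → m → R) (d : m → R) :
    ∑ i, d i • vecMulVec (v i) (star (v i)) =
      of (fun i j => v j i) * diagonal d * (of fun i j => v j i)ᴴ := by
  ext i j
  simp only [sum_apply, smul_apply, vecMulVec_apply, mul_apply, diagonal_apply, of_apply,
    conjTranspose_apply, Pi.star_apply, smul_eq_mul, mul_ite, mul_zero, Finset.sum_ite_eq',
    Finset.mem_univ, if_true]
  exact Finset.sum_congr rfl fun k _ => by ring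

theorem conjTranspose_mul_self_of_orthonormal {R : Type*} [CommSemiring R] [StarRing R]
    {v : m → m → R} (hv : ∀ i j, star (v i) ⬝ᵥ v j = if i = j then 1 else 0) :
    (of fun i j => v j i)ᴴ * of (fun i j => v j i) = 1 := by
  ext i j
  simpa [mul_apply, one_apply, dotProduct] using hv i j

theorem PosDef.pos_of_eq_mul_diagonal_mul {A V : Matrix m m ℂ} {d : m → ℝ} (hA : A.PosDef)
    (hV : Vᴴ * V = 1) (hAV : A = V * diagonal (fun i => (d i : ℂ)) * Vᴴ) (i : m) : 0 < d i := by
  have hD := hA.conjTranspose_mul_mul_same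
    (mulVec_injective_of_isUnit ((isUnit_iff_isUnit_det V).mpr (isUnit_det_of_left_inverse hV)))
  rw [hAV, ← mul_assoc, ← mul_assoc, hV, one_mul, mul_assoc, hV, mul_one,
    posDef_diagonal_iff] at hD
  exact_mod_cast hD i

end Matrix

theorem stmt3 {n : ℕ} (A K : Matrix (Fin n) (Fin n) ℂ) (hA : A.PosDef)
    (a : Fin n → ℝ) (v : Fin n → (Fin n → ℂ))
    (ha : ∀ i j : Fin n, i ≤ j → a j ≤ a i)
    (hortho : ∀ i j : Fin n, star (v i) ⬝ᵥ v j = if i = j then 1 else 0)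
    (hspec : A = ∑ i, (a i : ℂ) • Matrix.vecMulVec (v i) (star (v i))) :
    (∀ i : Fin n,
        Tendsto (fun p : ℝ => lam (mrpow (K * mrpow A p * Kᴴ) p⁻¹) i.1) atTop (nhds (a i))) ↔
      LinearIndependent ℂ (fun i : Fin n => K.mulVec (v i)) := by
  set V : Matrix (Fin n) (Fin n) ℂ := of fun i j => v j i
  have hV : Vᴴ * V = 1 := conjTranspose_mul_self_of_orthonormal hortho
  have hAV : A = V * diagonal (fun i => (a i : ℂ)) * Vᴴ :=
    hspec.trans (sum_smul_vecMulVec_eq_mul_diagonal_mul v _)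
  have ha_pos := hA.pos_of_eq_mul_diagonal_mul hV hAV
  have hlamA : ∀ i : Fin n, ∀ p > 0, lam (mrpow A p) i = a i ^ p := fun i p hp => by
    rw [lam_mrpow hA.posSemidef hp,
      lam_eq_of_charpoly_eq hA.1 (hAV ▸ charpoly_mul_diagonal_mul_conjTranspose hV a) ha]
  rw [linearIndependent_mulVec_iff_isUnit K
    ((isUnit_iff_isUnit_det V).mpr (isUnit_det_of_left_inverse hV))]
  refine ⟨fun hlim => ?_, fun hK i =>
    tendsto_lam_mrpow_mul_mrpow_mul_conjTranspose hA.posSemidef hK (ha_pos i).le (hlamA i)⟩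
  by_contra hK
  obtain rfl | hn := n.eq_zero_or_pos
  · exact hK (Subsingleton.elim K 1 ▸ isUnit_one)
  have hzero : (fun p : ℝ => lam (mrpow (K * mrpow A p * Kᴴ) p⁻¹) (n - 1)) =ᶠ[atTop] fun _ => 0 :=
    (eventually_gt_atTop 0).mono fun p hp =>
      lam_mrpow_mul_mrpow_mul_conjTranspose_eq_zero hA.posSemidef hK hp
  exact (ha_pos ⟨n - 1, by omega⟩).ne'
    (tendsto_const_nhds_iff.mp ((hlim ⟨n - 1, by omega⟩).congr' hzero)).symm
end

section
/- Let f be an operator monotone function on [0,∞) with f(0) = 0 and f(1) = 1, with associated Kubo–Ando operator mean σ_f. If A ∈ M_n(ℂ) is positive definite and E is an orthogonal projection, then A σ_f E = f̂(E A^{-1} E), where f̂(x) = f(x)/x for x > 0 and f̂(0) = 0. -/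
/-! With `T = A^{-1/2}` and `C = E T` one has `T E T = Cᴴ C` and `E A⁻¹ E = C Cᴴ`. As `f 0 = 0`,
`f(Cᴴ C) = Cᴴ C f̂(Cᴴ C)`, and `C g(Cᴴ C) = g(C Cᴴ) C` for every `g`, since on the finitely many
eigenvalues involved `g` agrees with a polynomial. Hence
`A σ_f E = A^{1/2} Cᴴ f̂(C Cᴴ) C A^{1/2} = E f̂(C Cᴴ) E = f̂(C Cᴴ)`, the last step because
`f̂(0) = 0` and `E` acts as the identity on both sides of `C Cᴴ`. -/

open Matrix Filter ComplexOrder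

def IsOperatorMonotone (f : ℝ → ℝ) : Prop :=
  ∀ (k : ℕ) (A B : Matrix (Fin k) (Fin k) ℂ), A.PosSemidef → B.PosSemidef →
    (B - A).PosSemidef →
    (hfun (fun t => (f t : ℂ)) B - hfun (fun t => (f t : ℂ)) A).PosSemidef

noncomputable def kuboAndo {n : ℕ} (f : ℝ → ℝ) (A B : Matrix (Fin n) (Fin n) ℂ) :
    Matrix (Fin n) (Fin n) ℂ :=
  mrpow A (1/2) *
    hfun (fun t => (f t : ℂ)) (mrpow A (-(1/2)) * B * mrpow A (-(1/2))) *
    mrpow A (1/2)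

noncomputable def gpow {n : ℕ} (A : Matrix (Fin n) (Fin n) ℂ) (p : ℝ) :
    Matrix (Fin n) (Fin n) ℂ :=
  hfun (fun t => if t = 0 then 0 else ((t ^ p : ℝ) : ℂ)) A

open Polynomial

theorem SemiconjBy.aeval {R A : Type*} [CommSemiring R] [Semiring A] [Algebra R A]
    {a x y : A} (h : SemiconjBy a x y) (p : R[X]) : SemiconjBy a (aeval x p) (aeval y p) := by
  induction p using Polynomial.induction_on' with
  | add p q hp hq => simpa only [map_add] using hp.add_right hq
  | monomial k r =>
    simpa only [aeval_monomial] using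
      SemiconjBy.mul_right (Algebra.commute_algebraMap_right r a) (h.pow_right k)

theorem exists_eval_eq_of_mem (s : Finset ℝ) (g : ℝ → ℂ) :
    ∃ p : ℂ[X], ∀ t ∈ s, p.eval (t : ℂ) = g t :=
  ⟨Lagrange.interpolate s (fun t : ℝ => (t : ℂ)) g, fun _ ht =>
    Lagrange.eval_interpolate_at_node _ Complex.ofReal_injective.injOn ht⟩

section

variable {n : ℕ} {A : Matrix (Fin n) (Fin n) ℂ}

theorem hfun_of_isHermitian (hA : A.IsHermitian) (g : ℝ → ℂ) :
    hfun g A = (hA.eigenvectorUnitary : Matrix (Fin n) (Fin n) ℂ) *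
      diagonal (fun i => g (hA.eigenvalues i)) *
      star (hA.eigenvectorUnitary : Matrix (Fin n) (Fin n) ℂ) :=
  dif_pos hA

theorem hfun_eq_aeval (hA : A.IsHermitian) (p : ℂ[X]) :
    hfun (fun t => p.eval (t : ℂ)) A = aeval A p := by
  conv_rhs => rw [hA.spectral_theorem, ← diagonalAlgHom_apply (R := ℂ)]
  rw [aeval_algHom_apply, aeval_algHom_apply, aeval_pi_apply, hfun_of_isHermitian hA]
  simp [aeval_def, eval₂_eq_eval_map]

theorem hfun_congr (hA : A.IsHermitian) {g h : ℝ → ℂ}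
    (hgh : ∀ i, g (hA.eigenvalues i) = h (hA.eigenvalues i)) : hfun g A = hfun h A := by
  simp only [hfun_of_isHermitian hA, hgh]

theorem hfun_eq_aeval_of_eval_eq (hA : A.IsHermitian) {g : ℝ → ℂ} {p : ℂ[X]}
    (hp : ∀ i, p.eval (hA.eigenvalues i : ℂ) = g (hA.eigenvalues i)) :
    hfun g A = aeval A p := by
  rw [← hfun_eq_aeval hA p]
  exact hfun_congr hA fun i => (hp i).symm

theorem hfun_mul_hfun (hA : A.IsHermitian) (g h : ℝ → ℂ) :
    hfun g A * hfun h A = hfun (fun t => g t * h t) A := by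
  have hU : star (hA.eigenvectorUnitary : Matrix (Fin n) (Fin n) ℂ) *
      (hA.eigenvectorUnitary : Matrix (Fin n) (Fin n) ℂ) = 1 :=
    Unitary.coe_star_mul_self _
  simp only [hfun_of_isHermitian hA, Matrix.mul_assoc]
  rw [← Matrix.mul_assoc _ (hA.eigenvectorUnitary : Matrix (Fin n) (Fin n) ℂ), hU,
    Matrix.one_mul, ← Matrix.mul_assoc (diagonal _), diagonal_mul_diagonal]

theorem hfun_const_one (hA : A.IsHermitian) : hfun (fun _ => (1 : ℂ)) A = 1 := by
  rw [hfun_of_isHermitian hA, diagonal_one, Matrix.mul_one,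
    Unitary.mul_star_self_of_mem hA.eigenvectorUnitary.2]

theorem hfun_id (hA : A.IsHermitian) : hfun (fun t => (t : ℂ)) A = A := by
  simpa using hfun_eq_aeval hA X

theorem isHermitian_hfun (hA : A.IsHermitian) {g : ℝ → ℂ} (hg : ∀ t, star (g t) = g t) :
    (hfun g A).IsHermitian := by
  rw [hfun_of_isHermitian hA]
  apply isHermitian_mul_mul_conjTranspose
  simp [IsHermitian, hg]

theorem mul_hfun_conjTranspose_mul_self (C : Matrix (Fin n) (Fin n) ℂ) (g : ℝ → ℂ) :
    C * hfun g (Cᴴ * C) = hfun g (C * Cᴴ) * C := by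
  have hX := isHermitian_conjTranspose_mul_self C
  have hY := isHermitian_mul_conjTranspose_self C
  obtain ⟨p, hp⟩ := exists_eval_eq_of_mem
    (Finset.univ.image hX.eigenvalues ∪ Finset.univ.image hY.eigenvalues) g
  rw [hfun_eq_aeval_of_eval_eq hX fun i => hp _ (by simp),
    hfun_eq_aeval_of_eval_eq hY fun i => hp _ (by simp)]
  have hC : SemiconjBy C (Cᴴ * C) (C * Cᴴ) := (Matrix.mul_assoc _ _ _).symm
  exact hC.aeval p

theorem mul_hfun_mul_of_mul_eq {Y E : Matrix (Fin n) (Fin n) ℂ} (hY : Y.IsHermitian)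
    (hEY : E * Y = Y) (hYE : Y * E = Y) {g : ℝ → ℂ} (hg0 : g 0 = 0) :
    E * hfun g Y * E = hfun g Y := by
  obtain ⟨p, hp⟩ := exists_eval_eq_of_mem (insert 0 (Finset.univ.image hY.eigenvalues)) g
  obtain ⟨q, rfl⟩ : X ∣ p := by
    rw [X_dvd_iff, coeff_zero_eq_eval_zero]
    simpa [hg0] using hp 0 (Finset.mem_insert_self _ _)
  have hq : Y * aeval Y q = aeval Y q * Y := (Commute.refl Y).aeval q
  rw [hfun_eq_aeval_of_eval_eq hY fun i => hp _ (by simp), map_mul, aeval_X]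
  calc E * (Y * aeval Y q) * E = (E * Y) * aeval Y q * E := by simp only [Matrix.mul_assoc]
    _ = aeval Y q * (Y * E) := by rw [hEY, hq, Matrix.mul_assoc]
    _ = Y * aeval Y q := by rw [hYE, hq]

theorem hfun_eq_mul_hfun_div (hA : A.PosSemidef) {f : ℝ → ℝ} (hf0 : f 0 = 0) :
    hfun (fun t => (f t : ℂ)) A =
      A * hfun (fun t => if 0 < t then ((f t / t : ℝ) : ℂ) else 0) A := by
  conv_rhs => enter [1]; rw [← hfun_id hA.isHermitian]
  rw [hfun_mul_hfun hA.isHermitian]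
  refine hfun_congr hA.isHermitian fun i => ?_
  rcases (hA.eigenvalues_nonneg i).lt_or_eq with hpos | hzero
  · rw [if_pos hpos, ← Complex.ofReal_mul, mul_div_cancel₀ _ hpos.ne']
  · simp [← hzero, hf0]

theorem isHermitian_mrpow (hA : A.IsHermitian) (p : ℝ) : (mrpow A p).IsHermitian :=
  isHermitian_hfun hA fun _ => Complex.conj_ofReal _

theorem mrpow_mul_mrpow (hA : A.PosDef) (p q : ℝ) :
    mrpow A p * mrpow A q = mrpow A (p + q) := by
  rw [mrpow, mrpow, hfun_mul_hfun hA.isHermitian]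
  refine hfun_congr hA.isHermitian fun i => ?_
  rw [← Complex.ofReal_mul, ← Real.rpow_add (hA.eigenvalues_pos i)]

theorem mrpow_zero (hA : A.IsHermitian) : mrpow A 0 = 1 := by
  simpa only [mrpow, Real.rpow_zero, Complex.ofReal_one] using hfun_const_one hA

end

theorem stmt14_general {n : ℕ} (f : ℝ → ℝ) (hf0 : f 0 = 0)
    (A E : Matrix (Fin n) (Fin n) ℂ) (hA : A.PosDef)
    (hE : E.IsHermitian) (hEidem : E * E = E) :
    kuboAndo f A E =
      hfun (fun t => if 0 < t then ((f t / t : ℝ) : ℂ) else 0) (E * mrpow A (-1) * E) := by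
  set fhat : ℝ → ℂ := fun t => if 0 < t then ((f t / t : ℝ) : ℂ) else 0
  set S := mrpow A (1/2)
  set T := mrpow A (-(1/2))
  set C := E * T
  have hCH : Cᴴ = T * E := by
    rw [conjTranspose_mul, (isHermitian_mrpow hA.isHermitian _).eq, hE.eq]
  have hST : S * T = 1 := by rw [mrpow_mul_mrpow hA]; norm_num [mrpow_zero hA.isHermitian]
  have hTS : T * S = 1 := by rw [mrpow_mul_mrpow hA]; norm_num [mrpow_zero hA.isHermitian]
  have hTT : T * T = mrpow A (-1) := by rw [mrpow_mul_mrpow hA]; norm_num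
  have hTET : T * E * T = Cᴴ * C := by
    simp only [hCH, C, Matrix.mul_assoc]
    rw [← Matrix.mul_assoc E E, hEidem]
  have hEA : E * mrpow A (-1) * E = C * Cᴴ := by
    simp only [hCH, ← hTT, C, Matrix.mul_assoc]
  have hSC : S * Cᴴ = E := by rw [hCH, ← Matrix.mul_assoc, hST, Matrix.one_mul]
  have hCS : C * S = E := by rw [Matrix.mul_assoc, hTS, Matrix.mul_one]
  have hEY : E * (C * Cᴴ) = C * Cᴴ := by
    rw [← hEA, ← Matrix.mul_assoc, ← Matrix.mul_assoc, hEidem]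
  have hYE : C * Cᴴ * E = C * Cᴴ := by rw [← hEA, Matrix.mul_assoc, hEidem]
  calc kuboAndo f A E = S * (Cᴴ * C * hfun fhat (Cᴴ * C)) * S := by
        rw [kuboAndo, hTET, hfun_eq_mul_hfun_div (posSemidef_conjTranspose_mul_self C) hf0]
    _ = (S * Cᴴ) * hfun fhat (C * Cᴴ) * (C * S) := by
        rw [Matrix.mul_assoc Cᴴ, mul_hfun_conjTranspose_mul_self]
        simp only [Matrix.mul_assoc]
    _ = hfun fhat (E * mrpow A (-1) * E) := by
        rw [hSC, hCS, mul_hfun_mul_of_mul_eq (isHermitian_mul_conjTranspose_self C) hEY hYE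
          (if_neg (lt_irrefl 0)), hEA]

theorem stmt14 {n : ℕ} (f : ℝ → ℝ) (hf : IsOperatorMonotone f) (hf0 : f 0 = 0) (hf1 : f 1 = 1)
    (A E : Matrix (Fin n) (Fin n) ℂ) (hA : A.PosDef)
    (hE : E.IsHermitian) (hEidem : E * E = E) :
    kuboAndo f A E =
      hfun (fun t => if 0 < t then ((f t / t : ℝ) : ℂ) else 0) (E * mrpow A (-1) * E) :=
  stmt14_general f hf0 A E hA hE hEidem
end

section
/- For any two orthogonal projections E and P on ℂ^n, the range of E P^⊥ E equals the range of E − P ∧ E; equivalently, ran(P ∧ E) = ran E ⊖ ran(E P^⊥ E). -/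
open Matrix Filter ComplexOrder

/-!
Both operators are self-adjoint, so their ranges are the orthogonal complements of their kernels,
and it suffices to show that both kernels equal `{x | E x ∈ ran P}`. For `E P^⊥ E` this holds
because `E P^⊥ E = (P^⊥ E)^* (P^⊥ E)` has the kernel of `P^⊥ E`. For `E - Q` with
`Q = P ∧ E` it holds because `Q ≤ E` gives `Q E = Q`, hence `E - Q = Q^⊥ E`.
-/

open LinearMap

section

variable {𝕜 V : Type*} [RCLike 𝕜] [NormedAddCommGroup V] [InnerProductSpace 𝕜 V]
  [FiniteDimensional 𝕜 V]

theorem LinearMap.IsSymmetric.range_eq_range_of_ker_eq {S T : V →ₗ[𝕜] V}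
    (hS : S.IsSymmetric) (hT : T.IsSymmetric) (h : ker S = ker T) : range S = range T := by
  rw [← (range S).orthogonal_orthogonal, hS.orthogonal_range, h, ← hT.orthogonal_range,
    Submodule.orthogonal_orthogonal]

namespace LinearMap.IsSymmetricProjection

theorem ker_mul_one_sub_mul {e p : Module.End 𝕜 V} (hp : p.IsSymmetricProjection)
    (he : e.IsSymmetric) : LinearMap.ker (e * (1 - p) * e) = (range p).comap e := by
  have hq : (1 - p).IsSymmetricProjection :=
    ⟨hp.isIdempotentElem.one_sub, IsSymmetric.sub (fun _ _ => rfl) hp.isSymmetric⟩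
  have hsq : e * (1 - p) * e = ((1 - p) * e).adjoint ∘ₗ ((1 - p) * e) := calc
    e * (1 - p) * e = e * ((1 - p) * (1 - p)) * e := by rw [hq.isIdempotentElem.eq]
    _ = ((1 - p) * e).adjoint ∘ₗ ((1 - p) * e) := by
      rw [Module.End.mul_eq_comp (1 - p) e, adjoint_comp, he.adjoint_eq,
        hq.isSymmetric.adjoint_eq]
      rfl
  rw [hsq, ker_adjoint_comp_self, Module.End.mul_eq_comp, ker_comp,
    hp.isIdempotentElem.range_eq_ker_one_sub]

theorem starProjection_mul_eq_of_le_range {e : Module.End 𝕜 V}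
    (he : e.IsSymmetricProjection) {U : Submodule 𝕜 V} (hU : U ≤ range e) :
    (U.starProjection : Module.End 𝕜 V) * e = U.starProjection := by
  obtain ⟨_, he'⟩ := isSymmetricProjection_iff_eq_coe_starProjection_range.mp he
  rw [he']
  exact congrArg ContinuousLinearMap.toLinearMap
    (U.starProjection_comp_starProjection_of_le (he' ▸ hU))

theorem ker_sub_starProjection_of_le_range {e : Module.End 𝕜 V}
    (he : e.IsSymmetricProjection) {U : Submodule 𝕜 V} (hU : U ≤ range e) :
    LinearMap.ker (e - (U.starProjection : V →ₗ[𝕜] V)) = U.comap e := by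
  have hsub : e - (U.starProjection : V →ₗ[𝕜] V) = (1 - U.starProjection) * e := by
    rw [sub_mul, one_mul, he.starProjection_mul_eq_of_le_range hU]
  rw [hsub, Module.End.mul_eq_comp, ker_comp,
    ← U.isSymmetricProjection_starProjection.isIdempotentElem.range_eq_ker_one_sub,
    U.range_starProjection]

theorem range_mul_one_sub_mul {e p : Module.End 𝕜 V}
    (he : e.IsSymmetricProjection) (hp : p.IsSymmetricProjection) :
    range (e * (1 - p) * e) =
      range (e - ((range p ⊓ range e).starProjection : V →ₗ[𝕜] V)) := by
  refine IsSymmetric.range_eq_range_of_ker_eq ?_ ?_ ?_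
  · intro x y
    simp [he.isSymmetric _, hp.isSymmetric _, inner_sub_left, inner_sub_right]
  · exact he.isSymmetric.sub (Submodule.starProjection_isSymmetric _)
  · rw [hp.ker_mul_one_sub_mul he.isSymmetric,
      he.ker_sub_starProjection_of_le_range inf_le_right, Submodule.comap_inf,
      range_le_iff_comap.mp le_rfl, inf_top_eq]

end LinearMap.IsSymmetricProjection

end

namespace Matrix

variable {𝕜 ι : Type*} [RCLike 𝕜] [Fintype ι] [DecidableEq ι]

theorem toEuclideanLin_mul (A B : Matrix ι ι 𝕜) :
    (A * B).toEuclideanLin = A.toEuclideanLin * B.toEuclideanLin := by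
  rw [← coe_toEuclideanCLM_eq_toEuclideanLin, map_mul]
  rfl

theorem toEuclideanLin_one : (1 : Matrix ι ι 𝕜).toEuclideanLin = 1 := by
  rw [← coe_toEuclideanCLM_eq_toEuclideanLin, map_one]
  rfl

theorem IsHermitian.isSymmetricProjection_toEuclideanLin {A : Matrix ι ι 𝕜}
    (hA : A.IsHermitian) (hAA : IsIdempotentElem A) : A.toEuclideanLin.IsSymmetricProjection :=
  ⟨by rw [IsIdempotentElem, ← toEuclideanLin_mul, hAA], isSymmetric_toEuclideanLin_iff.mpr hA⟩

end Matrix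

theorem toEuclideanLin_projOnto {n : ℕ} (U : Submodule ℂ (EuclideanSpace ℂ (Fin n))) :
    (projOnto U).toEuclideanLin = U.starProjection := by
  rw [projOnto, toEuclideanLin_eq_toLin_orthonormal, toLin_toMatrix]
  rfl

theorem stmt19 {n : ℕ} (E P : Matrix (Fin n) (Fin n) ℂ)
    (hE : E.IsHermitian) (hEidem : E * E = E)
    (hP : P.IsHermitian) (hPidem : P * P = P) :
    ranM (E * (1 - P) * E) = ranM (E - projOnto (ranM P ⊓ ranM E)) := by
  simp only [ranM]
  rw [toEuclideanLin_mul, toEuclideanLin_mul, map_sub, map_sub, toEuclideanLin_one,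
    toEuclideanLin_projOnto]
  exact (hE.isSymmetricProjection_toEuclideanLin hEidem).range_mul_one_sub_mul
    (hP.isSymmetricProjection_toEuclideanLin hPidem)
end
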